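/- arXiv:1403.2165 — 3 statements merged into one kernel-verified Lean document; each statement's English description precedes it below -/
import Mathlib

section
/- For every n ≥ 1 and all natural numbers a, b, the number of permutations σ ∈ S_n with inv(σ) = a and rmin(σ) = b equals the number of permutations σ ∈ S_n with sor(σ) = a and cyc(σ) = b; that is, the pairs of statistics (inv, rmin) and (sor, cyc) have the same joint distribution over S_n. -/
open scoped Classical

namespace SortIdx

variable {n : ℕ}

noncomputable section

/-- The inversion number `inv σ := #{(i,j) : i < j ∧ σ i > σ j}`. -/
def inv (σ : Equiv.Perm (Fin n)) : ℕ :=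
  (Finset.univ.filter (fun p : Fin n × Fin n => p.1 < p.2 ∧ σ p.2 < σ p.1)).card

/-- The inversion set `Inv σ := {(i,j) : i < j ∧ σ i > σ j}`. -/
def InvSet (σ : Equiv.Perm (Fin n)) : Finset (Fin n × Fin n) :=
  Finset.univ.filter (fun p : Fin n × Fin n => p.1 < p.2 ∧ σ p.2 < σ p.1)

/-- Right-to-left minimum letters. -/
def RmilSet (σ : Equiv.Perm (Fin n)) : Finset (Fin n) :=
  (Finset.univ.filter (fun i => ∀ j, i < j → σ i < σ j)).image σ

/-- The number of right-to-left minima. -/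
def rmin (σ : Equiv.Perm (Fin n)) : ℕ := (RmilSet σ).card

/-- Right-to-left minimum places. -/
def RmipSet (σ : Equiv.Perm (Fin n)) : Finset (Fin n) :=
  Finset.univ.filter (fun i => ∀ j, i < j → σ i < σ j)

/-- Right-to-left maximum letters. -/
def RmalSet (σ : Equiv.Perm (Fin n)) : Finset (Fin n) :=
  (Finset.univ.filter (fun i => ∀ j, i < j → σ j < σ i)).image σ

/-- The number of right-to-left maxima. -/
def rmax (σ : Equiv.Perm (Fin n)) : ℕ := (RmalSet σ).card

/-- Left-to-right minimum letters. -/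
def LmilSet (σ : Equiv.Perm (Fin n)) : Finset (Fin n) :=
  (Finset.univ.filter (fun i => ∀ j, j < i → σ i < σ j)).image σ

/-- The number of left-to-right minima. -/
def lmin (σ : Equiv.Perm (Fin n)) : ℕ := (LmilSet σ).card

/-- Left-to-right minimum places. -/
def LmipSet (σ : Equiv.Perm (Fin n)) : Finset (Fin n) :=
  Finset.univ.filter (fun i => ∀ j, j < i → σ i < σ j)

/-- Left-to-right maximum letters. -/
def LmalSet (σ : Equiv.Perm (Fin n)) : Finset (Fin n) :=
  (Finset.univ.filter (fun i => ∀ j, j < i → σ j < σ i)).image σ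

/-- The number of left-to-right maxima. -/
def lmax (σ : Equiv.Perm (Fin n)) : ℕ := (LmalSet σ).card

/-- Left-to-right maximum places. -/
def LmapSet (σ : Equiv.Perm (Fin n)) : Finset (Fin n) :=
  Finset.univ.filter (fun i => ∀ j, j < i → σ j < σ i)

/-- `Cyc σ`: the set of smallest elements of the cycles of `σ`
(`i` is smallest in its cycle iff `i ≤ σ^k i` for all `k`). -/
def CycSet (σ : Equiv.Perm (Fin n)) : Finset (Fin n) :=
  Finset.univ.filter (fun i => ∀ k : ℕ, i ≤ (σ ^ k) i)

/-- The number of cycles of `σ` (fixed points included). -/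
def cyc (σ : Equiv.Perm (Fin n)) : ℕ := (CycSet σ).card

/-- One step of the sorting process computing the sorting index: repeatedly
put the largest not-yet-fixed letter `j` in its place by the transposition
`(i j)` where `i = σ⁻¹ j` is the place of the letter `j`, recording the
distance `j - i`.  This produces the unique factorization
`σ = (i₁ j₁)(i₂ j₂)⋯(i_k j_k)` with `j₁ < ⋯ < j_k`, `i_r < j_r`, and sums
the `j_r - i_r`.  The fuel `n` is always sufficient. -/
def sorAux : ℕ → Equiv.Perm (Fin n) → ℕ
  | 0, _ => 0
  | (fuel + 1), σ =>
    if h : σ.support.Nonempty then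
      (((σ.support.max' h : Fin n) : ℕ) - ((σ⁻¹ (σ.support.max' h) : Fin n) : ℕ)) +
        sorAux fuel (σ * Equiv.swap (σ⁻¹ (σ.support.max' h)) (σ.support.max' h))
    else 0

/-- The sorting index of Petersen. -/
def sor (σ : Equiv.Perm (Fin n)) : ℕ := sorAux n σ

theorem bcode_exists (σ : Equiv.Perm (Fin n)) (i : Fin n) :
    ∃ k : ℕ, 0 < k ∧ (σ⁻¹ ^ k) i ≤ i := by
  refine ⟨orderOf σ⁻¹, orderOf_pos σ⁻¹, ?_⟩
  rw [pow_orderOf_eq_one]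
  simp

/-- The `B`-code of `σ`: `Bcode σ i = σ^(-k) i` where `k ≥ 1` is minimal with
`σ^(-k) i ≤ i`. -/
def Bcode (σ : Equiv.Perm (Fin n)) (i : Fin n) : Fin n :=
  (σ⁻¹ ^ (Nat.find (bcode_exists σ i))) i

/-- The `B`-code as a sequence in `L_n` (1-indexed values: the entry at place
`i` is the 1-indexed name of the letter `Bcode σ i`). -/
def BcodeNat (σ : Equiv.Perm (Fin n)) : Fin n → ℕ :=
  fun i => ((Bcode σ i : Fin n) : ℕ) + 1

/-- The Lehmer code: `Leh σ i = #{j : j ≤ i ∧ σ j ≤ σ i}` (1-indexed values). -/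
def Leh (σ : Equiv.Perm (Fin n)) : Fin n → ℕ :=
  fun i => (Finset.univ.filter (fun j => j ≤ i ∧ σ j ≤ σ i)).card

/-- The `A`-code: `A σ := Leh σ⁻¹`. -/
def Acode (σ : Equiv.Perm (Fin n)) : Fin n → ℕ := Leh σ⁻¹

/-- `O(code) := {i : code i = 1}` (for `1`-indexed codes in `L_n`). -/
def Oset (code : Fin n → ℕ) : Finset (Fin n) :=
  Finset.univ.filter (fun i => code i = 1)

/-- `Lmic1 σ := O(B σ)`, the set of places where the `B`-code equals `1`,
equivalently the left-to-right minima of the shifted cycle containing `1`. -/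
def Lmic1Set (σ : Equiv.Perm (Fin n)) : Finset (Fin n) :=
  Oset (BcodeNat σ)

/-- `lmic1 σ := #{i : (B σ)_i = 1}`. -/
def lmic1 (σ : Equiv.Perm (Fin n)) : ℕ := (Lmic1Set σ).card

/-- The bijection `φ = B⁻¹ ∘ A` of Foata–Han. -/
def phi (σ : Equiv.Perm (Fin n)) : Equiv.Perm (Fin n) :=
  Function.invFun BcodeNat (Acode σ)

/-- The algorithm computing the induced set of a code: the list argument is
the list of places still to process (from the last to the first), `S` is the
set of letters still available.  At place `i` we pick the `(code i)`-th
smallest element `l` of `S` (1-indexed), put the pairs `(l, j)` for `j ∈ S`,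
`j > l` into the answer and remove `l` from `S`. -/
def inducedAux : List (Fin n) → Finset (Fin n) → (Fin n → ℕ) → Finset (Fin n × Fin n)
  | [], _, _ => ∅
  | (i :: is), S, code =>
      ((S.filter (fun j => (S.sort (· ≤ ·)).getD (code i - 1) i < j)).image
          (fun j => ((S.sort (· ≤ ·)).getD (code i - 1) i, j))) ∪
        inducedAux is (S.erase ((S.sort (· ≤ ·)).getD (code i - 1) i)) code

/-- The induced set `⟨code⟩` of a code in `L_n`. -/
def induced (code : Fin n → ℕ) : Finset (Fin n × Fin n) :=
  inducedAux (List.finRange n).reverse Finset.univ code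

/-- The sorting set `Sor σ := ⟨B σ⟩`. -/
def SorSet (σ : Equiv.Perm (Fin n)) : Finset (Fin n × Fin n) :=
  induced (BcodeNat σ)

/-- The descent set (as a set of places `i`, `0`-indexed, such that
`σ i > σ (i+1)`). -/
def DesSet (σ : Equiv.Perm (Fin n)) : Finset (Fin n) :=
  Finset.univ.filter (fun i => ∃ h : (i : ℕ) + 1 < n, σ ⟨(i : ℕ) + 1, h⟩ < σ i)

/-- The major index (descents being counted `1`-indexed). -/
def maj (σ : Equiv.Perm (Fin n)) : ℕ :=
  ∑ i ∈ DesSet σ, ((i : ℕ) + 1)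

/-- The charge `chg σ := ∑_{i ∈ Des σ⁻¹} (n - i)` (descents `1`-indexed). -/
def chg (σ : Equiv.Perm (Fin n)) : ℕ :=
  ∑ i ∈ DesSet σ⁻¹, (n - ((i : ℕ) + 1))

/-- The reverse-complement of `σ` : `τ i = n + 1 - σ (n + 1 - i)` (1-indexed). -/
def revcomp (σ : Equiv.Perm (Fin n)) : Equiv.Perm (Fin n) :=
  Fin.revPerm * σ * Fin.revPerm

/-- The reverse major index `rmaj σ := maj (revcomp σ)`. -/
def rmaj (σ : Equiv.Perm (Fin n)) : ℕ := maj (revcomp σ)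

end

end SortIdx


/-!
Both pairs of statistics are carried to the codes `c` with `c i ≤ i` (there are `n!` of them),
where they become the pair (sum of the entries, number of zero entries).

For `(inv, rmin)`, record for each letter `v` the number of smaller letters to its right: these
numbers add up to the inversions, and `v` is a right-to-left minimum exactly when its entry is
zero. Reading the letters from the top down recovers the permutation.

For `(sor, cyc)`, send `c` to the product `∏ⱼ (j - c j, j)` over increasing `j`: this is the
factorization defining the sorting index, so `sor` is the sum of the entries. A factor with
`c j ≠ 0` inserts the letter `j`, fixed by the factors before it, into an existing cycle, so
the number of cycles drops from `n` by one for each nonzero entry.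
-/

open Finset Equiv Equiv.Perm

section SameCycle

variable {α : Type*} [Finite α]

theorem Equiv.Perm.SameCycle.mem_of_mapsTo {f : Perm α} {s : Set α} (hs : Set.MapsTo f s s)
    {x y : α} (hxy : f.SameCycle x y) (hx : x ∈ s) : y ∈ s := by
  obtain ⟨k, -, rfl⟩ := hxy.exists_pow_eq'
  exact hs.perm_pow k hx

variable [DecidableEq α]

/-- Multiplying by `swap i j` a permutation fixing `j` inserts `j` into the cycle of `i`,
right after `i`. -/
theorem Equiv.Perm.sameCycle_mul_swap_iff {τ : Perm α} {i j : α} (hj : τ j = j)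
    {x y : α} (hx : x ≠ j) (hy : y ≠ j) :
    (τ * swap i j).SameCycle x y ↔ τ.SameCycle x y := by
  constructor
  · intro h
    have hmaps : Set.MapsTo (τ * swap i j) {z | τ.SameCycle x z ∨ (z = j ∧ τ.SameCycle x i)}
        {z | τ.SameCycle x z ∨ (z = j ∧ τ.SameCycle x i)} := by
      rintro z (hz | ⟨rfl, hi⟩)
      · have hzj : z ≠ j := by rintro rfl; exact hx (hz.eq_of_right hj)
        by_cases hzi : z = i
        · subst hzi
          exact Or.inr ⟨by simp [hj], hz⟩
        · left
          rw [mul_apply, swap_apply_of_ne_of_ne hzi hzj, sameCycle_apply_right]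
          exact hz
      · left
        rw [mul_apply, swap_apply_right, sameCycle_apply_right]
        exact hi
    exact (h.mem_of_mapsTo hmaps (Or.inl .rfl)).resolve_right fun h => hy h.1
  · intro h
    refine h.mem_of_mapsTo (s := {z | (τ * swap i j).SameCycle x z}) (fun z hz => ?_) .rfl
    have hij : (τ * swap i j).SameCycle i j := ⟨1, by simp [hj]⟩
    have hswap : (τ * swap i j).SameCycle z (swap i j z) := by
      rcases eq_or_ne z i with rfl | hzi
      · simpa using hij
      rcases eq_or_ne z j with rfl | hzj
      · simpa using hij.symm
      · rw [swap_apply_of_ne_of_ne hzi hzj]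
    have hτz : τ z = (τ * swap i j) (swap i j z) := by simp
    exact hz.trans (hswap.trans (hτz ▸ sameCycle_apply_right.mpr .rfl))

end SameCycle

theorem Finset.injOn_card_filter_lt {α : Type*} [LinearOrder α] (s : Finset α) :
    Set.InjOn (fun a => #{b ∈ s | a < b}) s := by
  intro a ha b hb h
  by_contra hne
  wlog hab : a < b generalizing a b
  · exact this hb ha h.symm (Ne.symm hne) ((not_lt.mp hab).lt_of_ne' hne)
  refine (card_lt_card ((ssubset_iff_of_subset ?_).mpr ⟨b, ?_⟩)).ne' h
  · intro x hx
    simp only [mem_filter] at hx ⊢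
    exact ⟨hx.1, hab.trans hx.2⟩
  · simp [mem_coe.mp hb, hab]

theorem Fin.sum_filter_val_lt_succ {M : Type*} [AddCommMonoid M] {n m : ℕ} (f : Fin n → M)
    (hm : m < n) :
    ∑ i ∈ univ.filter (fun i : Fin n => ↑i < m + 1), f i =
      ∑ i ∈ univ.filter (fun i : Fin n => ↑i < m), f i + f ⟨m, hm⟩ := by
  have : univ.filter (fun i : Fin n => ↑i < m + 1) =
      insert ⟨m, hm⟩ (univ.filter fun i : Fin n => ↑i < m) := by
    ext i
    simp only [mem_filter, mem_univ, true_and, mem_insert, Fin.ext_iff]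
    omega
  rw [this, sum_insert (by simp), add_comm]

namespace SortIdx

variable {n : ℕ}

theorem mem_cycSet_iff {σ : Perm (Fin n)} {x : Fin n} :
    x ∈ CycSet σ ↔ ∀ y, σ.SameCycle x y → x ≤ y := by
  simp only [CycSet, mem_filter, mem_univ, true_and]
  refine ⟨fun h y hxy => ?_, fun h k => h _ ⟨k, by simp⟩⟩
  obtain ⟨k, -, rfl⟩ := hxy.exists_pow_eq'
  exact h k

theorem cycSet_mul_swap {τ : Perm (Fin n)} {i j : Fin n} (hj : τ j = j) (hij : i < j) :
    CycSet (τ * swap i j) = (CycSet τ).erase j := by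
  ext x
  rw [mem_erase, mem_cycSet_iff, mem_cycSet_iff]
  have hi : (τ * swap i j).SameCycle i j := ⟨1, by simp [hj]⟩
  rcases eq_or_ne x j with rfl | hxj
  · simp only [ne_eq, not_true_eq_false, false_and, iff_false, not_forall]
    exact ⟨i, hi.symm, not_le.mpr hij⟩
  rw [and_iff_right hxj]
  constructor
  · intro h y hxy
    have hyj : y ≠ j := by rintro rfl; exact hxj (hxy.eq_of_right hj)
    exact h y ((sameCycle_mul_swap_iff hj hxj hyj).mpr hxy)
  · intro h y hxy
    rcases eq_or_ne y j with rfl | hyj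
    · exact (h i ((sameCycle_mul_swap_iff hj hxj hij.ne).mp (hxy.trans hi.symm))).trans hij.le
    · exact h y ((sameCycle_mul_swap_iff hj hxj hyj).mp hxy)

theorem cyc_mul_swap_add_one {τ : Perm (Fin n)} {i j : Fin n} (hj : τ j = j) (hij : i < j) :
    cyc (τ * swap i j) + 1 = cyc τ := by
  rw [cyc, cyc, cycSet_mul_swap hj hij, card_erase_add_one]
  exact mem_cycSet_iff.mpr fun y hy => (hy.eq_of_left hj).le

theorem sorAux_one (fuel : ℕ) : sorAux fuel (1 : Perm (Fin n)) = 0 := by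
  cases fuel <;> simp [sorAux]

theorem sorAux_succ_of_apply_eq {σ : Perm (Fin n)} {i j : Fin n} (hσ : σ i = j) (hij : i < j)
    (hfix : ∀ x, j < x → σ x = x) (fuel : ℕ) :
    sorAux (fuel + 1) σ = ((j : ℕ) - i) + sorAux fuel (σ * swap i j) := by
  have hj : j ∈ σ.support := by
    rw [mem_support]
    intro h
    exact hij.ne (σ.injective (hσ.trans h.symm))
  have hmax : σ.support.max' ⟨j, hj⟩ = j :=
    le_antisymm (max'_le _ _ _ fun x hx => not_lt.mp fun hjx => mem_support.mp hx (hfix x hjx))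
      (le_max' _ _ hj)
  have hinv : σ⁻¹ j = i := by rw [inv_eq_iff_eq, hσ]
  rw [sorAux, dif_pos ⟨j, hj⟩, hmax, hinv]

abbrev Code (n : ℕ) := (i : Fin n) → Fin (i + 1)

theorem card_code : Fintype.card (Code n) = Fintype.card (Perm (Fin n)) := by
  simp only [Fintype.card_pi, Fintype.card_fin, Fintype.card_perm]
  rw [Fin.prod_univ_eq_prod_range (· + 1), prod_range_add_one_eq_factorial]

namespace Code

def sum (c : Code n) : ℕ := ∑ i, (c i : ℕ)

def zeros (c : Code n) : ℕ := #{i | (c i : ℕ) = 0}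

/-- The entry `c j` encodes the transposition `(j - c j, j)`. -/
def partner (c : Code n) (j : Fin n) : Fin n :=
  ⟨j - c j, (Nat.sub_le _ _).trans_lt j.2⟩

def swapProd (c : Code n) : ℕ → Perm (Fin n)
  | 0 => 1
  | m + 1 => if h : m < n then swapProd c m * swap (c.partner ⟨m, h⟩) ⟨m, h⟩ else swapProd c m

variable (c : Code n)

theorem partner_le (j : Fin n) : c.partner j ≤ j := by
  simp [partner, Fin.le_def]

theorem partner_lt_iff (j : Fin n) : c.partner j < j ↔ (c j : ℕ) ≠ 0 := by
  have := (c j).isLt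
  simp only [partner, Fin.lt_def]
  omega

theorem swapProd_succ {m : ℕ} (hm : m < n) :
    c.swapProd (m + 1) = c.swapProd m * swap (c.partner ⟨m, hm⟩) ⟨m, hm⟩ :=
  dif_pos hm

theorem swapProd_apply_of_le {m : ℕ} {x : Fin n} (hx : m ≤ x) : c.swapProd m x = x := by
  induction m with
  | zero => rfl
  | succ m ih =>
    have hm : m < n := by omega
    have hmx : (⟨m, hm⟩ : Fin n) < x := Fin.lt_def.mpr (by simp; omega)
    rw [swapProd_succ c hm, mul_apply,
      swap_apply_of_ne_of_ne ((c.partner_le _).trans_lt hmx).ne' hmx.ne', ih (by omega)]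

theorem swapProd_succ_apply_partner {m : ℕ} (hm : m < n) :
    c.swapProd (m + 1) (c.partner ⟨m, hm⟩) = ⟨m, hm⟩ := by
  rw [swapProd_succ c hm, mul_apply, swap_apply_left, swapProd_apply_of_le c (x := ⟨m, hm⟩) le_rfl]

theorem swapProd_succ_mul_swap {m : ℕ} (hm : m < n) :
    c.swapProd (m + 1) * swap (c.partner ⟨m, hm⟩) ⟨m, hm⟩ = c.swapProd m := by
  rw [swapProd_succ c hm, mul_assoc, swap_mul_self, mul_one]

theorem swapProd_succ_of_eq_zero {m : ℕ} (hm : m < n) (h0 : (c ⟨m, hm⟩ : ℕ) = 0) :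
    c.swapProd (m + 1) = c.swapProd m := by
  have : c.partner ⟨m, hm⟩ = ⟨m, hm⟩ := Fin.ext (by simp [partner, h0])
  rw [swapProd_succ c hm, this, swap_self, ← Perm.one_def, mul_one]

theorem sorAux_swapProd {m fuel : ℕ} (hm : m ≤ n) (hfuel : m ≤ fuel) :
    sorAux fuel (c.swapProd m) = ∑ i ∈ univ.filter (fun i : Fin n => ↑i < m), (c i : ℕ) := by
  induction m generalizing fuel with
  | zero => simp [swapProd, sorAux_one]
  | succ m ih =>
    rw [Fin.sum_filter_val_lt_succ _ hm]
    by_cases h0 : (c ⟨m, hm⟩ : ℕ) = 0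
    · rw [swapProd_succ_of_eq_zero c hm h0, ih (by omega) (by omega), h0, add_zero]
    obtain ⟨fuel, rfl⟩ : ∃ f, fuel = f + 1 := ⟨fuel - 1, by omega⟩
    rw [sorAux_succ_of_apply_eq (c.swapProd_succ_apply_partner hm)
      ((c.partner_lt_iff _).mpr h0) (fun x hx => c.swapProd_apply_of_le hx),
      swapProd_succ_mul_swap c hm, ih (by omega) (by omega), add_comm]
    simp [partner, Nat.sub_sub_self (Nat.lt_succ_iff.mp (c ⟨m, hm⟩).isLt)]

theorem cyc_swapProd {m : ℕ} (hm : m ≤ n) :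
    cyc (c.swapProd m) =
      n - m + ∑ i ∈ univ.filter (fun i : Fin n => ↑i < m), if (c i : ℕ) = 0 then 1 else 0 := by
  induction m with
  | zero => simp [swapProd, cyc, CycSet]
  | succ m ih =>
    rw [Fin.sum_filter_val_lt_succ _ hm]
    by_cases h0 : (c ⟨m, hm⟩ : ℕ) = 0
    · rw [swapProd_succ_of_eq_zero c hm h0, ih (by omega), if_pos h0]
      omega
    · have hstep := cyc_mul_swap_add_one (c.swapProd_apply_of_le (x := ⟨m, hm⟩) le_rfl)
        ((c.partner_lt_iff _).mpr h0)
      rw [← swapProd_succ c hm, ih (by omega)] at hstep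
      rw [if_neg h0]
      omega

theorem partner_inj {c' : Code n} {j : Fin n} : c.partner j = c'.partner j ↔ c j = c' j := by
  have := (c j).isLt
  have := (c' j).isLt
  simp only [partner, Fin.ext_iff]
  omega

theorem eq_of_swapProd_eq {c' : Code n} {m : ℕ} (hm : m ≤ n)
    (h : c.swapProd m = c'.swapProd m) (i : Fin n) (hi : ↑i < m) : c i = c' i := by
  induction m with
  | zero => omega
  | succ m ih =>
    have hpartner : c.partner ⟨m, hm⟩ = c'.partner ⟨m, hm⟩ :=
      (c.swapProd (m + 1)).injective <| by
        rw [swapProd_succ_apply_partner, h, swapProd_succ_apply_partner]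
    have hprefix : c.swapProd m = c'.swapProd m := by
      rw [← swapProd_succ_mul_swap c hm, ← swapProd_succ_mul_swap c' hm, h, hpartner]
    rcases Nat.lt_succ_iff_lt_or_eq.mp hi with hi | rfl
    · exact ih (by omega) hprefix hi
    · exact (partner_inj c).mp hpartner

theorem swapProd_injective : Function.Injective fun c : Code n => c.swapProd n :=
  fun c _ h => funext fun i => c.eq_of_swapProd_eq le_rfl h i i.isLt

theorem swapProd_bijective : Function.Bijective fun c : Code n => c.swapProd n :=
  (Fintype.bijective_iff_injective_and_card _).mpr ⟨swapProd_injective, card_code⟩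

theorem sor_swapProd : sor (c.swapProd n) = c.sum := by
  rw [sor, sorAux_swapProd c le_rfl le_rfl, Code.sum, filter_true_of_mem fun i _ => i.isLt]

theorem cyc_swapProd_eq_zeros : cyc (c.swapProd n) = c.zeros := by
  rw [cyc_swapProd c le_rfl, Code.zeros, card_filter, filter_true_of_mem fun i _ => i.isLt,
    Nat.sub_self, zero_add]

end Code

/-- `lehmerCode σ v` counts the letters smaller than `v` standing to the right of `v` in `σ`. -/
def lehmerCode (σ : Perm (Fin n)) : Code n := fun v =>
  ⟨#{u | u < v ∧ σ⁻¹ v < σ⁻¹ u}, Nat.lt_succ_of_le <|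
    (card_le_card fun _ hu => mem_Iio.mpr (mem_filter.mp hu).2.1).trans (Fin.card_Iio v).le⟩

theorem inv_eq_sum_lehmerCode (σ : Perm (Fin n)) : inv σ = (lehmerCode σ).sum := by
  calc inv σ = ∑ i, ∑ j, if i < j ∧ σ j < σ i then 1 else 0 := by
        rw [inv, card_filter, Fintype.sum_prod_type]
    _ = ∑ v, ∑ u, if σ⁻¹ v < σ⁻¹ u ∧ u < v then 1 else 0 := by
        rw [← Equiv.sum_comp σ⁻¹]
        refine sum_congr rfl fun v _ => ?_
        rw [← Equiv.sum_comp σ⁻¹]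
        simp
    _ = (lehmerCode σ).sum := by simp only [Code.sum, lehmerCode, card_filter, and_comm]

theorem rmilSet_eq_filter_lehmerCode (σ : Perm (Fin n)) :
    RmilSet σ = ({v | (lehmerCode σ v : ℕ) = 0} : Finset (Fin n)) := by
  ext v
  simp only [RmilSet, lehmerCode, mem_image, mem_filter, mem_univ, true_and, card_eq_zero,
    filter_eq_empty_iff, not_and, not_lt, true_implies]
  constructor
  · rintro ⟨i, hi, rfl⟩ u hu
    by_contra! h
    have := hi (σ⁻¹ u) (by simpa using h)
    exact lt_asymm hu (by simpa using this)
  · intro h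
    refine ⟨σ⁻¹ v, fun j hj => ?_, by simp⟩
    simp only [Perm.coe_inv, Equiv.apply_symm_apply]
    by_contra! hle
    have hne : σ j ≠ v := fun e => hj.ne (by simp [← e])
    exact (h (hle.lt_of_ne hne)).not_gt (by simpa using hj)

theorem rmin_eq_zeros_lehmerCode (σ : Perm (Fin n)) : rmin σ = (lehmerCode σ).zeros := by
  rw [rmin, rmilSet_eq_filter_lehmerCode, Code.zeros]

theorem card_lt_and_lt_eq_card_compl_image_Ioi (τ : Perm (Fin n)) (v : Fin n) :
    #{u | u < v ∧ τ v < τ u} = #{w ∈ ((Ioi v).image τ)ᶜ | τ v < w} := by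
  rw [← card_map τ.toEmbedding]
  congr 1
  ext w
  simp only [mem_map_equiv, mem_filter, mem_univ, true_and, mem_compl, mem_image, mem_Ioi,
    not_exists, not_and, Equiv.apply_symm_apply]
  refine and_congr_left fun hw => ⟨fun hlt x hvx hx => ?_, fun hall => ?_⟩
  · rw [← hx, Equiv.symm_apply_apply] at hlt
    exact lt_asymm hlt hvx
  · by_contra! hle
    rcases hle.lt_or_eq with hlt | heq
    · exact hall _ hlt (Equiv.apply_symm_apply τ w)
    · exact hw.ne (by rw [heq, Equiv.apply_symm_apply])

theorem eq_of_forall_card_lt_and_lt_eq {τ τ' : Perm (Fin n)}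
    (h : ∀ v, #{u | u < v ∧ τ v < τ u} = #{u | u < v ∧ τ' v < τ' u}) : τ = τ' := by
  ext1 v
  induction v using WellFoundedGT.induction with
  | _ v ih =>
  have himage : (Ioi v).image τ' = (Ioi v).image τ :=
    image_congr fun u hu => (ih u (mem_Ioi.mp hu)).symm
  have hmem : ∀ σ : Perm (Fin n), σ v ∈ ((Ioi v).image σ)ᶜ := fun σ => by simp
  refine injOn_card_filter_lt _ (hmem τ) (himage ▸ hmem τ') ?_
  dsimp only
  rw [← card_lt_and_lt_eq_card_compl_image_Ioi, ← himage, ← card_lt_and_lt_eq_card_compl_image_Ioi,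
    h]

theorem lehmerCode_injective : Function.Injective (lehmerCode (n := n)) := by
  intro σ σ' h
  refine inv_injective (eq_of_forall_card_lt_and_lt_eq fun v => ?_)
  exact congrArg Fin.val (congrFun h v)

theorem lehmerCode_bijective : Function.Bijective (lehmerCode (n := n)) :=
  (Fintype.bijective_iff_injective_and_card _).mpr ⟨lehmerCode_injective, card_code.symm⟩

end SortIdx

theorem inv_rmin_sor_cyc_equidistributed_general (n : ℕ) (a b : ℕ) :
    Nat.card {σ : Equiv.Perm (Fin n) // SortIdx.inv σ = a ∧ SortIdx.rmin σ = b} =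
      Nat.card {σ : Equiv.Perm (Fin n) // SortIdx.sor σ = a ∧ SortIdx.cyc σ = b} := by
  let lehmer := Equiv.ofBijective _ (SortIdx.lehmerCode_bijective (n := n))
  let sorting := Equiv.ofBijective _ (SortIdx.Code.swapProd_bijective (n := n))
  calc _ = Nat.card {c : SortIdx.Code n // c.sum = a ∧ c.zeros = b} :=
        Nat.card_congr <| lehmer.subtypeEquiv fun σ => by
          simp [lehmer, SortIdx.inv_eq_sum_lehmerCode, SortIdx.rmin_eq_zeros_lehmerCode]
    _ = _ :=
        Nat.card_congr <| sorting.subtypeEquiv fun c => by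
          simp [sorting, SortIdx.Code.sor_swapProd, SortIdx.Code.cyc_swapProd_eq_zeros]

/-- Petersen.  For every `n ≥ 1` and all `a b : ℕ`, the number of
permutations of `[n]` with `inv = a` and `rmin = b` equals the number with
`sor = a` and `cyc = b`. -/
theorem inv_rmin_sor_cyc_equidistributed (n : ℕ) (hn : 1 ≤ n) (a b : ℕ) :
    Nat.card {σ : Equiv.Perm (Fin n) // SortIdx.inv σ = a ∧ SortIdx.rmin σ = b} =
      Nat.card {σ : Equiv.Perm (Fin n) // SortIdx.sor σ = a ∧ SortIdx.cyc σ = b} :=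
  inv_rmin_sor_cyc_equidistributed_general n a b
end

section
/- For every n ≥ 1, the following polynomial identity holds in ℤ[q,x]: Σ_{σ∈S_n} q^{inv(σ)} x^{rmin(σ)} = Σ_{σ∈S_n} q^{sor(σ)} x^{cyc(σ)} = x · ∏_{r=2}^{n} (x + [r]_q − 1). -/
open scoped Classical

/-!
Both generating functions satisfy `F (n + 1) = (x + [n + 1]_q - 1) * F n`, because each pair of
statistics is compatible with a bijection `Fin (n + 1) × S_n → S_{n+1}` whose effect depends only
on the place `i`: inserting the letter `n + 1` at place `i` adds `n + 1 - i` inversions and creates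
a new right-to-left minimum exactly when `i = n + 1`; extending `τ` by the fixed point `n + 1` and
multiplying by the transposition `(i, n + 1)` adds `n + 1 - i` to the sorting index (it is the
first transposition the sorting process undoes) and creates a new cycle exactly when `i = n + 1`
(otherwise `n + 1` joins the cycle of `i`).
-/

namespace SortIdx
open Equiv Finset

variable {n : ℕ}

section Recursion

variable {R : Type*} [CommRing R] (q x : R)

theorem sum_pow_sub_mul_pow_ite_last :
    ∑ i : Fin (n + 1), q ^ (n - i : ℕ) * x ^ (if i = Fin.last n then 1 else 0) =
      x + ∑ k ∈ range (n + 1), q ^ k - 1 := by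
  rw [← Fintype.sum_equiv Fin.revPerm (fun i => q ^ (i : ℕ) * x ^ (if i = 0 then 1 else 0)) _
      (fun i => by simp [Fin.rev_eq_iff, Nat.sub_sub_self (Fin.is_le i)]),
    Fin.sum_univ_succ, sum_range_succ']
  simp [Fin.succ_ne_zero, Fin.sum_univ_eq_sum_range (fun k => q ^ (k + 1))]
  ring

theorem sum_pow_mul_pow_succ_of_injective {s t : Perm (Fin (n + 1)) → ℕ}
    {s' t' : Perm (Fin n) → ℕ} (φ : Fin (n + 1) → Perm (Fin n) → Perm (Fin (n + 1)))
    (hφ : Function.Injective (Function.uncurry φ)) (hs : ∀ i τ, s (φ i τ) = s' τ + (n - i))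
    (ht : ∀ i τ, t (φ i τ) = t' τ + if i = Fin.last n then 1 else 0) :
    ∑ σ, q ^ s σ * x ^ t σ =
      (x + ∑ k ∈ range (n + 1), q ^ k - 1) * ∑ τ, q ^ s' τ * x ^ t' τ := by
  have hbij : Function.Bijective (Function.uncurry φ) := by
    rw [Fintype.bijective_iff_injective_and_card]
    exact ⟨hφ, by simp [Fintype.card_perm, Nat.factorial_succ]⟩
  rw [← Fintype.sum_bijective _ hbij _ _ (fun _ => rfl), Fintype.sum_prod_type,
    ← sum_pow_sub_mul_pow_ite_last, sum_mul]
  refine sum_congr rfl fun i _ => ?_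
  rw [mul_sum]
  refine sum_congr rfl fun τ _ => ?_
  simp only [Function.uncurry_apply_pair, hs, ht, pow_add]
  ring

theorem sum_pow_mul_pow_eq_prod (s t : ∀ n, Perm (Fin n) → ℕ) (hs₀ : s 0 1 = 0)
    (ht₀ : t 0 1 = 0) (φ : ∀ n, Fin (n + 1) → Perm (Fin n) → Perm (Fin (n + 1)))
    (hφ : ∀ n, Function.Injective (Function.uncurry (φ n)))
    (hs : ∀ n i τ, s (n + 1) (φ n i τ) = s n τ + (n - i))
    (ht : ∀ n i τ, t (n + 1) (φ n i τ) = t n τ + if i = Fin.last n then 1 else 0) (n : ℕ) :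
    ∑ σ : Perm (Fin n), q ^ s n σ * x ^ t n σ =
      ∏ r ∈ Icc 1 n, (x + ∑ k ∈ range r, q ^ k - 1) := by
  induction n with
  | zero => rw [Fintype.sum_subsingleton _ 1]; simp [hs₀, ht₀]
  | succ n ih =>
    rw [sum_pow_mul_pow_succ_of_injective q x (φ n) (hφ n) (hs n) (ht n), ih,
      prod_Icc_succ_top (by omega), mul_comm]

end Recursion

/-- The word of `τ` with the letter `Fin.last n` inserted at place `i`. -/
def insertMax (i : Fin (n + 1)) (τ : Perm (Fin n)) : Perm (Fin (n + 1)) :=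
  ((finSuccEquiv' i).trans (optionCongr τ)).trans finSuccEquivLast.symm

@[simp] theorem insertMax_self (i : Fin (n + 1)) (τ : Perm (Fin n)) :
    insertMax i τ i = Fin.last n := by
  simp [insertMax]

@[simp] theorem insertMax_succAbove (i : Fin (n + 1)) (τ : Perm (Fin n)) (a : Fin n) :
    insertMax i τ (i.succAbove a) = (τ a).castSucc := by
  simp [insertMax, finSuccEquivLast_symm_some]

theorem insertMax_injective : Function.Injective (Function.uncurry (@insertMax n)) := by
  rintro ⟨i, τ⟩ ⟨i', τ'⟩ h
  simp only [Function.uncurry_apply_pair] at h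
  obtain rfl : i = i' := by
    by_contra hii
    obtain ⟨a, ha⟩ := Fin.exists_succAbove_eq hii
    have := insertMax_self i τ
    rw [h, ← ha, insertMax_succAbove] at this
    exact (Fin.castSucc_lt_last _).ne this
  refine Prod.ext rfl (Equiv.ext fun a => Fin.castSucc_injective n ?_)
  rw [← insertMax_succAbove i, h, insertMax_succAbove]

theorem inv_insertMax (i : Fin (n + 1)) (τ : Perm (Fin n)) :
    inv (insertMax i τ) = inv τ + (n - i) := by
  have hIoi : ∑ b : Fin n, (if i < i.succAbove b then 1 else 0) = n - i := by
    have h := Fin.sum_univ_succAbove (fun j => if i < j then 1 else 0) i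
    rw [← card_filter, filter_lt_eq_Ioi, Fin.card_Ioi] at h
    simp only [lt_self_iff_false, if_false, zero_add, Nat.add_sub_cancel] at h
    exact h.symm
  simp only [inv, card_filter, ← univ_product_univ, sum_product, Fin.sum_univ_succAbove _ i,
    insertMax_self, insertMax_succAbove, Fin.succAbove_lt_succAbove_iff,
    Fin.castSucc_lt_castSucc_iff, Fin.castSucc_lt_last, lt_self_iff_false]
  simp [hIoi, not_lt.mpr (Fin.le_last _), add_comm]

theorem rmin_eq_card_filter (σ : Perm (Fin n)) : rmin σ = #{i | ∀ j, i < j → σ i < σ j} :=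
  card_image_of_injective _ σ.injective

theorem rmin_insertMax (i : Fin (n + 1)) (τ : Perm (Fin n)) :
    rmin (insertMax i τ) = rmin τ + if i = Fin.last n then 1 else 0 := by
  have hself : (∀ j, i < j → Fin.last n < insertMax i τ j) ↔ i = Fin.last n := by
    refine ⟨fun h => ?_, fun h j hj => absurd hj (h ▸ not_lt.mpr (Fin.le_last j))⟩
    by_contra hi
    exact not_lt.mpr (Fin.le_last _) (h _ (Fin.lt_last_iff_ne_last.mpr hi))
  have hsuccAbove (a : Fin n) : (∀ j, i.succAbove a < j →
      insertMax i τ (i.succAbove a) < insertMax i τ j) ↔ ∀ b, a < b → τ a < τ b := by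
    simp [Fin.forall_iff_succAbove i, Fin.succAbove_lt_succAbove_iff]
  rw [rmin_eq_card_filter, rmin_eq_card_filter, card_filter, card_filter,
    Fin.sum_univ_succAbove _ i]
  simp only [insertMax_self, hself, hsuccAbove, add_comm]

def extendLast (τ : Perm (Fin n)) : Perm (Fin (n + 1)) := insertMax (Fin.last n) τ

@[simp] theorem extendLast_castSucc (τ : Perm (Fin n)) (a : Fin n) :
    extendLast τ a.castSucc = (τ a).castSucc := by
  simpa [extendLast] using insertMax_succAbove (Fin.last n) τ a

@[simp] theorem extendLast_last (τ : Perm (Fin n)) : extendLast τ (Fin.last n) = Fin.last n :=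
  insertMax_self _ τ

theorem extendLast_injective : Function.Injective (@extendLast n) := fun τ τ' h =>
  congrArg Prod.snd (insertMax_injective (a₁ := (Fin.last n, τ)) (a₂ := (Fin.last n, τ')) h)

theorem extendLast_mul_swap_injective :
    Function.Injective (Function.uncurry fun (i : Fin (n + 1)) (τ : Perm (Fin n)) =>
      extendLast τ * swap i (Fin.last n)) := by
  rintro ⟨i, τ⟩ ⟨i', τ'⟩ h
  simp only [Function.uncurry_apply_pair] at h
  have hlast (i : Fin (n + 1)) (τ : Perm (Fin n)) :
      (extendLast τ * swap i (Fin.last n)) i = Fin.last n := by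
    simp
  obtain rfl : i = i' := (extendLast τ' * swap i' (Fin.last n)).injective <| by
    rw [hlast, ← h, hlast]
  rw [extendLast_injective (mul_right_cancel h)]

theorem extendLast_inv_castSucc (τ : Perm (Fin n)) (a : Fin n) :
    (extendLast τ)⁻¹ a.castSucc = (τ⁻¹ a).castSucc := by
  rw [Perm.inv_eq_iff_eq, extendLast_castSucc]
  simp

theorem extendLast_mul_swap (τ : Perm (Fin n)) (a b : Fin n) :
    extendLast τ * swap a.castSucc b.castSucc = extendLast (τ * swap a b) := by
  ext j
  cases j using Fin.lastCases with
  | last =>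
    simp [swap_apply_of_ne_of_ne (Fin.castSucc_lt_last a).ne' (Fin.castSucc_lt_last b).ne']
  | cast c =>
    rcases eq_or_ne c a with rfl | hca
    · simp
    rcases eq_or_ne c b with rfl | hcb
    · simp
    rw [Perm.mul_apply, swap_apply_of_ne_of_ne (by simpa using hca) (by simpa using hcb),
      extendLast_castSucc, extendLast_castSucc, Perm.mul_apply, swap_apply_of_ne_of_ne hca hcb]

theorem support_extendLast (τ : Perm (Fin n)) :
    (extendLast τ).support = τ.support.image Fin.castSucc := by
  ext j
  cases j using Fin.lastCases with
  | last => simp [(Fin.castSucc_lt_last _).ne]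
  | cast a => simp

theorem lt_max'_of_mem_support_mul_swap {σ : Perm (Fin n)} (h : σ.support.Nonempty) {k : Fin n}
    (hk : k ∈ (σ * swap (σ⁻¹ (σ.support.max' h)) (σ.support.max' h)).support) :
    k < σ.support.max' h := by
  set m := σ.support.max' h
  have hm : m ∈ σ.support := max'_mem _ _
  refine lt_of_le_of_ne (le_max' _ _ ?_) ?_
  · rcases eq_or_ne k (σ⁻¹ m) with rfl | hkm'
    · rwa [← Perm.apply_mem_support, Perm.coe_inv, apply_symm_apply]
    rcases eq_or_ne k m with rfl | hkm
    · exact hm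
    rw [Perm.mem_support, Perm.mul_apply, swap_apply_of_ne_of_ne hkm' hkm] at hk
    exact Perm.mem_support.mpr hk
  · rintro rfl
    simp at hk

theorem sorAux_succ_of_support_lt {f : ℕ} {σ : Perm (Fin n)}
    (hσ : ∀ k ∈ σ.support, (k : ℕ) < f) : sorAux (f + 1) σ = sorAux f σ := by
  induction f generalizing σ with
  | zero =>
    obtain rfl : σ = 1 := Perm.support_eq_empty_iff.mp
      (eq_empty_of_forall_notMem fun k hk => Nat.not_lt_zero _ (hσ k hk))
    simp [sorAux]
  | succ f ih =>
    by_cases h : σ.support.Nonempty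
    · have hmax : ((σ.support.max' h : Fin n) : ℕ) < f + 1 := hσ _ (max'_mem _ _)
      have hnext : ∀ k ∈ (σ * swap (σ⁻¹ (σ.support.max' h)) (σ.support.max' h)).support,
          (k : ℕ) < f := fun k hk =>
        (Fin.lt_def.mp (lt_max'_of_mem_support_mul_swap h hk)).trans_le (Nat.lt_succ_iff.mp hmax)
      rw [sorAux.eq_2 σ (f + 1), sorAux.eq_2 σ f, dif_pos h, dif_pos h, ih hnext]
    · simp only [sorAux, dif_neg h]

theorem sorAux_extendLast (f : ℕ) (τ : Perm (Fin n)) :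
    sorAux f (extendLast τ) = sorAux f τ := by
  induction f generalizing τ with
  | zero => rfl
  | succ f ih =>
    by_cases h : τ.support.Nonempty
    · have h' : (extendLast τ).support.Nonempty := by
        rw [support_extendLast]; exact h.image _
      have hmax : (extendLast τ).support.max' h' = (τ.support.max' h).castSucc := by
        simp only [support_extendLast, max'_image Fin.strictMono_castSucc.monotone]
      simp only [sorAux, dif_pos h, dif_pos h', hmax, extendLast_inv_castSucc,
        extendLast_mul_swap, ih, Fin.val_castSucc]
    · have h' : ¬ (extendLast τ).support.Nonempty := by
        rwa [support_extendLast, image_nonempty]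
      simp only [sorAux, dif_neg h, dif_neg h']

theorem sor_extendLast_mul_swap (i : Fin (n + 1)) (τ : Perm (Fin n)) :
    sor (extendLast τ * swap i (Fin.last n)) = sor τ + (n - i) := by
  have hfuel : sorAux (n + 1) τ = sor τ := sorAux_succ_of_support_lt fun k _ => k.isLt
  rcases eq_or_ne i (Fin.last n) with rfl | hi
  · rw [swap_self, ← Perm.one_def, mul_one, sor, sorAux_extendLast, hfuel, Fin.val_last,
      Nat.sub_self, add_zero]
  set σ := extendLast τ * swap i (Fin.last n)
  obtain ⟨a, rfl⟩ := Fin.exists_castSucc_eq.mpr hi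
  have hσ : σ (Fin.last n) = (τ a).castSucc := by simp [σ]
  have hmem : Fin.last n ∈ σ.support := by
    rw [Perm.mem_support, hσ]; exact (Fin.castSucc_lt_last _).ne
  have hmax : σ.support.max' ⟨_, hmem⟩ = Fin.last n :=
    le_antisymm (Fin.le_last _) (le_max' _ _ hmem)
  have hinv : σ⁻¹ (Fin.last n) = a.castSucc := by
    rw [Perm.inv_eq_iff_eq]
    simp [σ]
  have hstep : σ * swap a.castSucc (Fin.last n) = extendLast τ := by simp [σ, mul_assoc]
  rw [sor, sorAux, dif_pos ⟨_, hmem⟩, hmax, hinv, hstep, sorAux_extendLast, Fin.val_last,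
    Fin.val_castSucc, add_comm]
  rfl

section Cycles

/-- `σ` arises from `τ` by inserting `Fin.last n` into one of its cycles, or as a fixed point. -/
def InsertsLast (σ : Perm (Fin (n + 1))) (τ : Perm (Fin n)) : Prop :=
  ∀ a, σ a.castSucc = (τ a).castSucc ∨
    σ a.castSucc = Fin.last n ∧ σ (Fin.last n) = (τ a).castSucc

variable {σ : Perm (Fin (n + 1))} {τ : Perm (Fin n)}

theorem InsertsLast.exists_pow_eq (H : InsertsLast σ τ) (m : Fin n) (k : ℕ) :
    ∃ j, (σ ^ j) m.castSucc = ((τ ^ k) m).castSucc := by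
  induction k with
  | zero => exact ⟨0, rfl⟩
  | succ k ih =>
    obtain ⟨j, hj⟩ := ih
    rcases H ((τ ^ k) m) with h | ⟨h, h'⟩
    · exact ⟨j + 1, by rw [pow_succ', Perm.mul_apply, hj, h, pow_succ', Perm.mul_apply]⟩
    · exact ⟨j + 2, by rw [pow_succ', pow_succ', Perm.mul_apply, Perm.mul_apply, hj, h, h',
        pow_succ', Perm.mul_apply]⟩

theorem InsertsLast.pow_apply_castSucc (H : InsertsLast σ τ) (m : Fin n) (j : ℕ) :
    ∃ k, (σ ^ j) m.castSucc = ((τ ^ k) m).castSucc ∨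
      (σ ^ j) m.castSucc = Fin.last n ∧ σ (Fin.last n) = ((τ ^ k) m).castSucc := by
  induction j with
  | zero => exact ⟨0, Or.inl rfl⟩
  | succ j ih =>
    obtain ⟨k, hk | ⟨hk, hk'⟩⟩ := ih <;> rw [pow_succ', Perm.mul_apply, hk]
    · rcases H ((τ ^ k) m) with h | ⟨h, h'⟩
      · exact ⟨k + 1, .inl (by rw [h, pow_succ', Perm.mul_apply])⟩
      · exact ⟨k + 1, .inr ⟨h, by rw [h', pow_succ', Perm.mul_apply]⟩⟩
    · exact ⟨k, .inl hk'⟩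

theorem InsertsLast.castSucc_mem_cycSet_iff (H : InsertsLast σ τ) (m : Fin n) :
    m.castSucc ∈ CycSet σ ↔ m ∈ CycSet τ := by
  simp only [CycSet, mem_filter, mem_univ, true_and]
  refine ⟨fun h k => ?_, fun h j => ?_⟩
  · obtain ⟨j, hj⟩ := H.exists_pow_eq m k
    simpa [hj] using h j
  · obtain ⟨k, hk | ⟨hk, -⟩⟩ := H.pow_apply_castSucc m j
    · simpa [hk] using h k
    · exact hk ▸ Fin.le_last _

theorem last_mem_cycSet_iff (σ : Perm (Fin (n + 1))) :
    Fin.last n ∈ CycSet σ ↔ σ (Fin.last n) = Fin.last n := by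
  simp only [CycSet, mem_filter, mem_univ, true_and]
  refine ⟨fun h => le_antisymm (Fin.le_last _) (h 1), fun h k => ?_⟩
  rw [Perm.pow_apply_eq_self_of_apply_eq_self h]

theorem InsertsLast.cyc_eq (H : InsertsLast σ τ) :
    cyc σ = cyc τ + if σ (Fin.last n) = Fin.last n then 1 else 0 := by
  have hcard (m : ℕ) (s : Finset (Fin m)) : #s = ∑ i, if i ∈ s then 1 else 0 := by simp
  rw [cyc, cyc, hcard, hcard, Fin.sum_univ_castSucc]
  simp only [H.castSucc_mem_cycSet_iff, last_mem_cycSet_iff]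

theorem insertsLast_extendLast_mul_swap (i : Fin (n + 1)) (τ : Perm (Fin n)) :
    InsertsLast (extendLast τ * swap i (Fin.last n)) τ := by
  intro a
  rcases eq_or_ne a.castSucc i with rfl | hi
  · exact .inr (by simp)
  · exact .inl (by simp [swap_apply_of_ne_of_ne hi (Fin.castSucc_lt_last a).ne])

theorem cyc_extendLast_mul_swap (i : Fin (n + 1)) (τ : Perm (Fin n)) :
    cyc (extendLast τ * swap i (Fin.last n)) = cyc τ + if i = Fin.last n then 1 else 0 := by
  have hfix : extendLast τ i = Fin.last n ↔ i = Fin.last n := by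
    conv_lhs => rw [← extendLast_last τ]
    exact (extendLast τ).injective.eq_iff
  rw [(insertsLast_extendLast_mul_swap i τ).cyc_eq, Perm.mul_apply, swap_apply_right]
  simp only [hfix]

end Cycles

end SortIdx

open MvPolynomial in
/-- In `ℤ[q,x]`, `q = X 0` and `x = X 1`. -/
theorem genfun_inv_rmin_eq_sor_cyc (n : ℕ) (hn : 1 ≤ n) :
    (∑ σ : Equiv.Perm (Fin n),
        (X 0 : MvPolynomial (Fin 2) ℤ) ^ SortIdx.inv σ * X 1 ^ SortIdx.rmin σ) =
      (∑ σ : Equiv.Perm (Fin n),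
        (X 0 : MvPolynomial (Fin 2) ℤ) ^ SortIdx.sor σ * X 1 ^ SortIdx.cyc σ) ∧
    (∑ σ : Equiv.Perm (Fin n),
        (X 0 : MvPolynomial (Fin 2) ℤ) ^ SortIdx.sor σ * X 1 ^ SortIdx.cyc σ) =
      X 1 * ∏ r ∈ Finset.Icc 2 n,
        (X 1 + (∑ t ∈ Finset.range r, (X 0 : MvPolynomial (Fin 2) ℤ) ^ t) - 1) := by
  have hinv := SortIdx.sum_pow_mul_pow_eq_prod (X 0 : MvPolynomial (Fin 2) ℤ) (X 1)
    (fun _ => SortIdx.inv) (fun _ => SortIdx.rmin) (by simp [SortIdx.inv])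
    (by simp [SortIdx.rmin, SortIdx.RmilSet]) (fun _ => SortIdx.insertMax)
    (fun _ => SortIdx.insertMax_injective) (fun _ => SortIdx.inv_insertMax)
    (fun _ => SortIdx.rmin_insertMax) n
  have hsor := SortIdx.sum_pow_mul_pow_eq_prod (X 0 : MvPolynomial (Fin 2) ℤ) (X 1)
    (fun _ => SortIdx.sor) (fun _ => SortIdx.cyc) rfl (by simp [SortIdx.cyc, SortIdx.CycSet])
    (fun _ i τ => SortIdx.extendLast τ * Equiv.swap i (Fin.last _))
    (fun _ => SortIdx.extendLast_mul_swap_injective) (fun _ => SortIdx.sor_extendLast_mul_swap)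
    (fun _ => SortIdx.cyc_extendLast_mul_swap) n
  have hfirst : ∏ r ∈ Finset.Icc 1 n,
        (X 1 + (∑ t ∈ Finset.range r, (X 0 : MvPolynomial (Fin 2) ℤ) ^ t) - 1) =
      X 1 * ∏ r ∈ Finset.Icc 2 n,
        (X 1 + (∑ t ∈ Finset.range r, (X 0 : MvPolynomial (Fin 2) ℤ) ^ t) - 1) := by
    rw [← Finset.insert_Icc_succ_left_eq_Icc hn, Finset.prod_insert (by simp)]
    simp
  exact ⟨hinv.trans hsor.symm, hsor.trans hfirst⟩
end

section
/- For every σ ∈ S_n, Rmil(σ) = Cyc(φ(σ)) and Lmap(σ) = Lmap(φ(σ)); that is, (Rmil, Lmap)(σ) = (Cyc, Lmap)(φ(σ)). -/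
open scoped Classical

/-!
Both sides are read off codes. For the A-code `Leh σ⁻¹`, the places `v` with value `v + 1` are
`Rmil σ`, and the weak right-to-left minimum values, shifted by one, are `Lmap σ`. For the B-code
of `τ` the same two sets are `Cyc τ` and `Lmap τ`: `B τ v = v` says that `v` is the least element
of its cycle, and `v ≤ τ (B τ v)` ties the minima of the code to the left-to-right maxima of `τ`.
Since `B (φ σ) = A σ`, the statistics agree. That `B` reaches every code is a counting argument:
`B` is injective, because for the largest non-fixed letter `k` of `τ` we have `B τ k = τ⁻¹ k`,
and `τ * (τ⁻¹ k, k)` fixes `k` and has the same B-code below `k`, its inverse being the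
first-return map of `τ⁻¹` on the letters other than `k`.
-/

namespace SortIdx

open Equiv Finset

variable {n : ℕ}

section FirstHit

variable {α : Type*}

inductive FirstHit (f : α → α) (S : α → Prop) : α → α → Prop
  | step {x : α} : S (f x) → FirstHit f S x (f x)
  | skip {x y : α} : ¬ S (f x) → FirstHit f S (f x) y → FirstHit f S x y

variable {f : α → α} {S : α → Prop} {x y : α}

theorem FirstHit.mem (h : FirstHit f S x y) : S y := by
  induction h with
  | step hx => exact hx
  | skip _ _ ih => exact ih

theorem FirstHit.unique {y' : α} (h : FirstHit f S x y) (h' : FirstHit f S x y') : y = y' := by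
  induction h with
  | step hx => cases h' with
    | step => rfl
    | skip hx' => exact absurd hx hx'
  | skip hx _ ih => cases h' with
    | step hx' => exact absurd hx' hx
    | skip _ h' => exact ih h'

theorem FirstHit.exists_pred (h : FirstHit f S x y) : ∃ z, f z = y ∧ (z = x ∨ ¬ S z) := by
  induction h with
  | step => exact ⟨_, rfl, .inl rfl⟩
  | @skip x _ hx _ ih =>
    obtain ⟨z, hz, rfl | hz'⟩ := ih
    exacts [⟨f x, hz, .inr hx⟩, ⟨z, hz, .inr hz'⟩]

theorem firstHit_iterate {K : ℕ} (hK : 0 < K) (hS : S (f^[K] x))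
    (hmin : ∀ j, 0 < j → j < K → ¬ S (f^[j] x)) : FirstHit f S x (f^[K] x) := by
  induction K generalizing x with
  | zero => exact absurd hK (lt_irrefl 0)
  | succ K ih =>
    rcases Nat.eq_zero_or_pos K with rfl | hK
    · exact .step hS
    · rw [Function.iterate_succ_apply] at hS ⊢
      refine .skip (hmin 1 one_pos (by omega)) (ih hK hS fun j hj hjK => ?_)
      rw [← Function.iterate_succ_apply]
      exact hmin (j + 1) (by omega) (by omega)

-- `swap (f k) k * f` is `f` with the point `k` cut out of its cycle.
theorem FirstHit.swap_mul [DecidableEq α] {f : Perm α} {k : α} (hk : ¬ S k) (hx : x ≠ k)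
    (h : FirstHit f S x y) : FirstHit (swap (f k) k * f) S x y := by
  have apply_of_ne : ∀ z, z ≠ k → f z ≠ k → (swap (f k) k * f) z = f z := fun z hz hfz =>
    swap_apply_of_ne_of_ne (fun h => hz (f.injective h)) hfz
  have apply_of_eq : ∀ z, f z = k → (swap (f k) k * f) z = f k := fun z hz => by
    rw [Perm.mul_apply, hz, swap_apply_right]
  -- the second component lets the induction continue from `f k` once the orbit passes through `k`
  suffices key : ∀ x y, FirstHit f S x y → (x ≠ k → FirstHit (swap (f k) k * f) S x y) ∧
      (x = k → ¬ S (f k) → FirstHit (swap (f k) k * f) S (f k) y) from (key x y h).1 hx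
  intro x y h
  induction h with
  | @step x hS' =>
    refine ⟨fun hx => ?_, fun hx hS'' => absurd (hx ▸ hS') hS''⟩
    have e := apply_of_ne x hx fun h => hk (h ▸ hS')
    rw [← e]
    exact .step (e ▸ hS')
  | @skip x y hS' h ih =>
    refine ⟨fun hx => ?_, fun hx _ => ?_⟩
    · by_cases hfx : f x = k
      · by_cases hfk : S (f k)
        · have hy : y = f k := (hfx ▸ h).unique (.step hfk)
          have hstep : FirstHit (swap (f k) k * f) S x _ := .step (by rwa [apply_of_eq x hfx])
          rw [hy]
          rwa [apply_of_eq x hfx] at hstep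
        · refine .skip (by rwa [apply_of_eq x hfx]) ?_
          rw [apply_of_eq x hfx]
          exact ih.2 hfx hfk
      · refine .skip (by rwa [apply_of_ne x hx hfx]) ?_
        rw [apply_of_ne x hx hfx]
        exact ih.1 hfx
    · subst hx
      by_cases hfk : f x = x
      · exact hfk ▸ ih.2 hfk (hfk ▸ hS')
      · exact ih.1 hfk

end FirstHit

theorem forall_pow_apply_iff_forall_sameCycle {α : Type*} [Finite α] (τ : Perm α) (x : α)
    (P : α → Prop) : (∀ k : ℕ, P ((τ ^ k) x)) ↔ ∀ y, τ.SameCycle x y → P y := by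
  refine ⟨fun h y hy => ?_, fun h k => h _ (Perm.sameCycle_pow_right.mpr (.refl τ x))⟩
  obtain ⟨k, rfl⟩ := hy.exists_nat_pow_eq
  exact h k

theorem firstHit_bcode (σ : Perm (Fin n)) (i : Fin n) :
    FirstHit ⇑σ⁻¹ (· ≤ i) i (Bcode σ i) := by
  have hK := Nat.find_spec (bcode_exists σ i)
  rw [Perm.coe_pow] at hK
  rw [Bcode, Perm.coe_pow]
  refine firstHit_iterate hK.1 hK.2 fun j hj hjK hle =>
    Nat.find_min (bcode_exists σ i) hjK ⟨hj, ?_⟩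
  rwa [Perm.coe_pow]

theorem bcode_eq_of_firstHit {σ : Perm (Fin n)} {i y : Fin n}
    (h : FirstHit ⇑σ⁻¹ (· ≤ i) i y) : Bcode σ i = y :=
  (firstHit_bcode σ i).unique h

theorem bcode_le (σ : Perm (Fin n)) (i : Fin n) : Bcode σ i ≤ i :=
  (firstHit_bcode σ i).mem

theorem bcode_of_inv_apply_le {σ : Perm (Fin n)} {i : Fin n} (h : σ⁻¹ i ≤ i) :
    Bcode σ i = σ⁻¹ i :=
  bcode_eq_of_firstHit (.step h)

theorem bcode_of_apply_eq {σ : Perm (Fin n)} {i : Fin n} (h : σ i = i) : Bcode σ i = i := by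
  have hi : σ⁻¹ i = i := Perm.inv_eq_iff_eq.mpr h.symm
  rw [bcode_of_inv_apply_le hi.le, hi]

theorem le_apply_bcode (σ : Perm (Fin n)) (i : Fin n) : i ≤ σ (Bcode σ i) := by
  obtain ⟨z, hz, rfl | hz'⟩ := (firstHit_bcode σ i).exists_pred
  all_goals rw [← hz, Perm.coe_inv, apply_symm_apply]
  exact (not_le.mp hz').le

theorem bcode_mul_swap_of_lt (σ : Perm (Fin n)) {i k : Fin n} (hik : i < k) :
    Bcode (σ * swap (σ⁻¹ k) k) i = Bcode σ i := by
  refine bcode_eq_of_firstHit ?_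
  rw [mul_inv_rev, swap_inv]
  exact (firstHit_bcode σ i).swap_mul (S := (· ≤ i)) (not_le.mpr hik) hik.ne

theorem mem_cycSet_iff_bcode (τ : Perm (Fin n)) (i : Fin n) :
    i ∈ CycSet τ ↔ Bcode τ i = i := by
  have hK := Nat.find_spec (bcode_exists τ i)
  set K := Nat.find (bcode_exists τ i)
  have orbit_iff : (∀ k : ℕ, i ≤ (τ ^ k) i) ↔ ∀ k : ℕ, i ≤ (τ⁻¹ ^ k) i := by
    rw [forall_pow_apply_iff_forall_sameCycle, forall_pow_apply_iff_forall_sameCycle]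
    simp only [Perm.sameCycle_inv]
  rw [CycSet, mem_filter, orbit_iff]
  simp only [mem_univ, true_and]
  refine ⟨fun h => (bcode_le τ i).antisymm (h K), fun h k => ?_⟩
  have hper : Function.IsPeriodicPt ⇑τ⁻¹ K i := by
    rw [Function.IsPeriodicPt, Function.IsFixedPt, ← Perm.coe_pow]; exact h
  rw [Perm.coe_pow, ← hper.iterate_mod_apply, ← Perm.coe_pow]
  rcases Nat.eq_zero_or_pos (k % K) with h0 | hpos
  · rw [h0, pow_zero, Perm.one_apply]
  · exact (not_le.mp fun hle =>
      Nat.find_min (bcode_exists τ i) (Nat.mod_lt k hK.1) ⟨hpos, hle⟩).le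

theorem forall_lt_apply_lt_iff_forall_le_apply_le {α β : Type*} [PartialOrder α]
    [PartialOrder β] {f : α → β} (hf : Function.Injective f) (v : α) :
    (∀ j, j < v → f j < f v) ↔ ∀ j, j ≤ v → f j ≤ f v :=
  ⟨fun h j hj => hj.eq_or_lt.elim (fun e => e ▸ le_rfl) fun hlt => (h j hlt).le,
    fun h j hj => (h j hj.le).lt_of_ne (hf.ne hj.ne)⟩

theorem mem_lmapSet_iff (π : Perm (Fin n)) (v : Fin n) :
    v ∈ LmapSet π ↔ ∀ j, j ≤ v → π j ≤ π v := by
  rw [LmapSet, mem_filter, ← forall_lt_apply_lt_iff_forall_le_apply_le π.injective]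
  simp only [mem_univ, true_and]

theorem rmilSet_eq_lmapSet_inv (σ : Perm (Fin n)) : RmilSet σ = LmapSet σ⁻¹ := by
  ext v
  rw [mem_lmapSet_iff, RmilSet, mem_image]
  constructor
  · rintro ⟨i, hi, rfl⟩ u hu
    simp only [mem_filter, mem_univ, true_and] at hi
    simp only [Perm.coe_inv, symm_apply_apply]
    exact not_lt.mp fun h => (hi _ h).not_ge (by simpa using hu)
  · intro h
    refine ⟨σ⁻¹ v, mem_filter.mpr ⟨mem_univ _, fun j hj => not_le.mp fun hle => ?_⟩,
      by simp⟩
    have := (h (σ j) (by simpa using hle)).trans_lt hj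
    rw [Perm.coe_inv, symm_apply_apply] at this
    exact lt_irrefl j this

theorem lmapSet_eq_rmilSet_inv (σ : Perm (Fin n)) : LmapSet σ = RmilSet σ⁻¹ := by
  rw [rmilSet_eq_lmapSet_inv, inv_inv]

theorem mem_rmilSet_iff_inv_apply_mem_rmipSet (π : Perm (Fin n)) (v : Fin n) :
    v ∈ RmilSet π ↔ π⁻¹ v ∈ RmipSet π := by
  rw [RmilSet, ← RmipSet, mem_image]
  exact ⟨fun ⟨i, hi, hv⟩ => by rwa [← hv, Perm.coe_inv, symm_apply_apply],
    fun h => ⟨_, h, by simp⟩⟩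

section Leh

variable (π : Perm (Fin n))

theorem card_filter_apply_le (x : Fin n) : #{j | π j ≤ x} = x + 1 := by
  rw [← Fin.card_Iic]
  exact card_equiv π (by simp)

theorem card_filter_apply_lt (x : Fin n) : #{j | π j < x} = x := by
  rw [← Fin.card_Iio]
  exact card_equiv π (by simp)

theorem leh_eq_card_filter_Iic (v : Fin n) : Leh π v = #{j ∈ Iic v | π j ≤ π v} := by
  rw [Leh]
  congr 1
  ext j
  simp

theorem leh_le (v : Fin n) : Leh π v ≤ v + 1 := by
  rw [leh_eq_card_filter_Iic, ← Fin.card_Iic]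
  exact card_filter_le _ _

theorem leh_eq_iff_mem_lmapSet (v : Fin n) : Leh π v = v + 1 ↔ v ∈ LmapSet π := by
  rw [leh_eq_card_filter_Iic, ← Fin.card_Iic, card_filter_eq_iff, mem_lmapSet_iff]
  simp only [mem_Iic]

variable {π}

theorem leh_of_mem_rmipSet {w : Fin n} (hw : w ∈ RmipSet π) : Leh π w = π w + 1 := by
  rw [Leh, ← card_filter_apply_le π (π w)]
  congr 1
  ext j
  simp only [mem_filter, mem_univ, true_and, and_iff_right_iff_imp]
  exact fun hj => not_lt.mp fun hlt => ((mem_filter.mp hw).2 j hlt).not_ge hj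

theorem leh_le_leh_of_mem_rmipSet {w u : Fin n} (hw : w ∈ RmipSet π) (hwu : w ≤ u) :
    Leh π w ≤ Leh π u := by
  have hπ : π w ≤ π u :=
    hwu.eq_or_lt.elim (fun e => e ▸ le_rfl) fun hlt => ((mem_filter.mp hw).2 u hlt).le
  refine card_le_card fun j hj => ?_
  simp only [mem_filter, mem_univ, true_and] at hj ⊢
  exact ⟨hj.1.trans hwu, hj.2.trans hπ⟩

variable (π)

theorem exists_mem_rmipSet_leh_le (v : Fin n) :
    ∃ w, v ≤ w ∧ w ∈ RmipSet π ∧ Leh π w ≤ Leh π v := by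
  obtain ⟨w, hvw, hmin⟩ := (Ici v).exists_min_image π ⟨v, mem_Ici.mpr le_rfl⟩
  rw [mem_Ici] at hvw
  have hw : w ∈ RmipSet π := mem_filter.mpr ⟨mem_univ _, fun u hwu =>
    (hmin u (mem_Ici.mpr (hvw.trans hwu.le))).lt_of_ne (π.injective.ne hwu.ne)⟩
  refine ⟨w, hvw, hw, ?_⟩
  set T : Finset (Fin n) := {j | j ≤ v ∧ π j ≤ π v} with hT
  have hv : v ∈ T := by simp [hT]
  have hsub : ({j | π j < π w} : Finset (Fin n)) ⊆ T.erase v := by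
    intro j hj
    simp only [hT, mem_filter, mem_univ, true_and, mem_erase] at hj ⊢
    have hjv : j < v := not_le.mp fun hvj => (hmin j (mem_Ici.mpr hvj)).not_gt hj
    exact ⟨hjv.ne, hjv.le, (hj.trans_le (hmin v (mem_Ici.mpr le_rfl))).le⟩
  calc Leh π w = #{j | π j < π w} + 1 := by rw [leh_of_mem_rmipSet hw, card_filter_apply_lt]
    _ ≤ #(T.erase v) + 1 := by gcongr
    _ = Leh π v := card_erase_add_one hv

end Leh

def codeRmil (c : Fin n → ℕ) : Set ℕ := {m | ∃ v, c v = m ∧ ∀ u, v ≤ u → m ≤ c u}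

theorem mem_rmilSet_iff_leh (π : Perm (Fin n)) (i : Fin n) :
    i ∈ RmilSet π ↔ (i : ℕ) + 1 ∈ codeRmil (Leh π) := by
  rw [mem_rmilSet_iff_inv_apply_mem_rmipSet]
  constructor
  · intro h
    have hleh : Leh π (π⁻¹ i) = i + 1 := by
      rw [leh_of_mem_rmipSet h, Perm.coe_inv, apply_symm_apply]
    exact ⟨π⁻¹ i, hleh, fun u hu => hleh ▸ leh_le_leh_of_mem_rmipSet h hu⟩
  · rintro ⟨v, hv, hmin⟩
    obtain ⟨w, hvw, hw, hle⟩ := exists_mem_rmipSet_leh_le π v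
    have hwi : π w = i := by
      have := hmin w hvw
      rw [leh_of_mem_rmipSet hw] at this hle
      exact Fin.ext (by omega)
    rwa [← hwi, Perm.coe_inv, symm_apply_apply]

theorem mem_rmilSet_iff_acode (σ : Perm (Fin n)) (v : Fin n) :
    v ∈ RmilSet σ ↔ Acode σ v = v + 1 := by
  rw [rmilSet_eq_lmapSet_inv, Acode, leh_eq_iff_mem_lmapSet]

theorem mem_lmapSet_iff_acode (σ : Perm (Fin n)) (i : Fin n) :
    i ∈ LmapSet σ ↔ (i : ℕ) + 1 ∈ codeRmil (Acode σ) := by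
  rw [lmapSet_eq_rmilSet_inv, Acode, mem_rmilSet_iff_leh]

theorem le_apply_of_forall_apply_le {f : Fin n → Fin n} (hf : Function.Injective f) {i : Fin n}
    (h : ∀ j, j ≤ i → f j ≤ f i) : i ≤ f i := by
  have := card_le_card_of_injOn f (s := Iic i) (t := Iic (f i))
    (fun j hj => mem_Iic.mpr (h j (mem_Iic.mp hj))) hf.injOn
  rw [Fin.card_Iic, Fin.card_Iic] at this
  exact Fin.le_def.mpr (by omega)

theorem mem_lmapSet_iff_bcode (τ : Perm (Fin n)) (i : Fin n) :
    i ∈ LmapSet τ ↔ ∃ v, Bcode τ v = i ∧ ∀ u, v ≤ u → i ≤ Bcode τ u := by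
  have bcode_apply : ∀ j, (∀ j', j' ≤ j → τ j' ≤ τ j) → Bcode τ (τ j) = j := by
    intro j h
    have hle : τ⁻¹ (τ j) ≤ τ j := by simpa using le_apply_of_forall_apply_le τ.injective h
    simpa using bcode_of_inv_apply_le hle
  rw [mem_lmapSet_iff]
  constructor
  · intro h
    refine ⟨τ i, bcode_apply i h, fun u hu => not_lt.mp fun hlt => ?_⟩
    have := (h _ hlt.le).lt_of_ne (τ.injective.ne hlt.ne)
    exact (hu.trans (le_apply_bcode τ u)).not_gt this
  · rintro ⟨v, rfl, hmin⟩
    obtain ⟨j₀, hj₀, hmax⟩ :=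
      (Iic (Bcode τ v)).exists_max_image τ ⟨_, mem_Iic.mpr le_rfl⟩
    rw [mem_Iic] at hj₀
    have hle : τ j₀ ≤ τ (Bcode τ v) := not_lt.mp fun hlt => by
      have hb := bcode_apply j₀ fun j hj => hmax j (mem_Iic.mpr (hj.trans hj₀))
      have := hmin (τ j₀) ((le_apply_bcode τ v).trans hlt.le)
      rw [hb] at this
      rw [le_antisymm hj₀ this] at hlt
      exact lt_irrefl _ hlt
    exact fun j hj => (hmax j (mem_Iic.mpr hj)).trans hle

theorem mem_lmapSet_iff_bcodeNat (τ : Perm (Fin n)) (i : Fin n) :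
    i ∈ LmapSet τ ↔ (i : ℕ) + 1 ∈ codeRmil (BcodeNat τ) := by
  rw [mem_lmapSet_iff_bcode]
  simp only [codeRmil, Set.mem_ofPred_eq, BcodeNat, Fin.ext_iff, Fin.le_def, add_left_inj,
    add_le_add_iff_right]

theorem mem_cycSet_iff_bcodeNat (τ : Perm (Fin n)) (i : Fin n) :
    i ∈ CycSet τ ↔ BcodeNat τ i = i + 1 := by
  rw [mem_cycSet_iff_bcode]
  simp [BcodeNat, Fin.ext_iff]

section Injectivity

variable {σ : Perm (Fin n)} {k : Fin n}

theorem inv_apply_le_of_forall_gt (hσ : ∀ j, k < j → σ j = j) : σ⁻¹ k ≤ k :=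
  not_lt.mp fun h => h.ne (by simpa using hσ _ h)

theorem mul_swap_apply_of_le (hσ : ∀ j, k < j → σ j = j) {j : Fin n} (hj : k ≤ j) :
    (σ * swap (σ⁻¹ k) k) j = j := by
  rcases hj.eq_or_lt with rfl | hlt
  · simp
  · rw [Perm.mul_apply, swap_apply_of_ne_of_ne ((inv_apply_le_of_forall_gt hσ).trans_lt hlt).ne'
      hlt.ne', hσ j hlt]

theorem bcode_mul_swap (hσ : ∀ j, k < j → σ j = j) (i : Fin n) :
    Bcode (σ * swap (σ⁻¹ k) k) i = if i < k then Bcode σ i else i := by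
  split_ifs with h
  · exact bcode_mul_swap_of_lt σ h
  · exact bcode_of_apply_eq (mul_swap_apply_of_le hσ (not_lt.mp h))

end Injectivity

theorem eq_of_bcode_eq_of_fixes_ge (m : ℕ) : ∀ σ τ : Perm (Fin n),
    (∀ j : Fin n, m ≤ j → σ j = j) → (∀ j : Fin n, m ≤ j → τ j = j) →
    Bcode σ = Bcode τ → σ = τ := by
  induction m with
  | zero =>
    intro σ τ hσ hτ _
    exact Equiv.ext fun j => (hσ j j.val.zero_le).trans (hτ j j.val.zero_le).symm
  | succ m ih =>
    intro σ τ hσ hτ hB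
    rcases lt_or_ge m n with hm | hm
    · set k : Fin n := ⟨m, hm⟩
      have hσk : ∀ j, k < j → σ j = j := fun j hj => hσ j (Fin.lt_def.mp hj)
      have hτk : ∀ j, k < j → τ j = j := fun j hj => hτ j (Fin.lt_def.mp hj)
      have hinv : σ⁻¹ k = τ⁻¹ k := by
        rw [← bcode_of_inv_apply_le (inv_apply_le_of_forall_gt hσk),
          ← bcode_of_inv_apply_le (inv_apply_le_of_forall_gt hτk), hB]
      have key := ih (σ * swap (σ⁻¹ k) k) (τ * swap (τ⁻¹ k) k)
        (fun j hj => mul_swap_apply_of_le hσk (Fin.le_def.mpr hj))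
        (fun j hj => mul_swap_apply_of_le hτk (Fin.le_def.mpr hj))
        (funext fun i => by rw [bcode_mul_swap hσk, bcode_mul_swap hτk, hB])
      rw [hinv] at key
      exact mul_right_cancel key
    · exact ih σ τ (fun j _ => absurd j.isLt (by omega)) (fun j _ => absurd j.isLt (by omega)) hB

theorem bcode_injective : Function.Injective (Bcode (n := n)) := fun σ τ =>
  eq_of_bcode_eq_of_fixes_ge n σ τ (fun j hj => absurd j.isLt (not_lt.mpr hj))
    (fun j hj => absurd j.isLt (not_lt.mpr hj))

theorem bcodeNat_injective : Function.Injective (BcodeNat (n := n)) := fun σ τ h =>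
  bcode_injective (funext fun i => Fin.ext (by simpa [BcodeNat] using congrFun h i))

def subexcedant (n : ℕ) : Finset (Fin n → ℕ) :=
  Fintype.piFinset fun i => Icc 1 ((i : ℕ) + 1)

theorem card_subexcedant : #(subexcedant n) = n.factorial := by
  simp only [subexcedant, Fintype.card_piFinset, Nat.card_Icc, add_tsub_cancel_right]
  rw [Fin.prod_univ_eq_prod_range (· + 1), prod_range_add_one_eq_factorial]

theorem bcodeNat_mem_subexcedant (σ : Perm (Fin n)) : BcodeNat σ ∈ subexcedant n :=
  Fintype.mem_piFinset.mpr fun i =>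
    mem_Icc.mpr ⟨Nat.le_add_left _ _, Nat.add_le_add_right (bcode_le σ i) 1⟩

theorem leh_mem_subexcedant (π : Perm (Fin n)) : Leh π ∈ subexcedant n :=
  Fintype.mem_piFinset.mpr fun i => mem_Icc.mpr ⟨card_pos.mpr ⟨i, by simp⟩, leh_le π i⟩

theorem image_bcodeNat : univ.image (BcodeNat (n := n)) = subexcedant n :=
  eq_of_subset_of_card_le (image_subset_iff.mpr fun σ _ => bcodeNat_mem_subexcedant σ) <| by
    rw [card_subexcedant, card_image_of_injective _ bcodeNat_injective, card_univ,
      Fintype.card_perm, Fintype.card_fin]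

theorem bcodeNat_phi (σ : Perm (Fin n)) : BcodeNat (phi σ) = Acode σ := by
  obtain ⟨τ, -, hτ⟩ := mem_image.mp (image_bcodeNat ▸ leh_mem_subexcedant σ⁻¹)
  exact Function.invFun_eq ⟨τ, hτ⟩

end SortIdx

/-- Foata–Han.  `(Rmil, Lmap) σ = (Cyc, Lmap) (φ σ)`. -/
theorem rmil_lmap_eq_cyc_lmap_phi (n : ℕ) (σ : Equiv.Perm (Fin n)) :
    SortIdx.RmilSet σ = SortIdx.CycSet (SortIdx.phi σ) ∧
    SortIdx.LmapSet σ = SortIdx.LmapSet (SortIdx.phi σ) := by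
  have hphi := SortIdx.bcodeNat_phi σ
  refine ⟨Finset.ext fun v => ?_, Finset.ext fun i => ?_⟩
  · rw [SortIdx.mem_rmilSet_iff_acode, SortIdx.mem_cycSet_iff_bcodeNat, hphi]
  · rw [SortIdx.mem_lmapSet_iff_acode, SortIdx.mem_lmapSet_iff_bcodeNat, hphi]
end
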